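/- arXiv:0911.1500 — 9 statements merged into one kernel-verified Lean document; each statement's English description precedes it below -/
import Mathlib

section
/- Let H be a real Hilbert space and D a dictionary (a set of unit vectors whose span is dense) with cumulative coherence μ₁(D) := sup_{g∈D} Σ_{g̃∈D, g̃≠g} |⟨g̃,g⟩| satisfying μ₁(D) < 1/2. Then for any finite collection of distinct elements g¹,…,g^N ∈ D and real coefficients c₁,…,c_N, one has (1 − 2μ₁(D)) Σ_{ν=1}^N c_ν² ≤ ‖Σ_{ν=1}^N c_ν g^ν‖² ≤ (1 + 2μ₁(D)) Σ_{ν=1}^N c_ν². -/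
open RealInnerProductSpace Finset

/-- Quasi-orthogonality estimate (Lemma 1): for a dictionary with cumulative
coherence bounded by `μ < 1/2`, finite linear combinations of distinct
dictionary elements satisfy `(1-2μ)Σc² ≤ ‖Σ c g‖² ≤ (1+2μ)Σc²`. -/
theorem quasi_orthogonality
    {H : Type*} [NormedAddCommGroup H] [InnerProductSpace ℝ H] [CompleteSpace H]
    (D : Set H) (hDnorm : ∀ g ∈ D, ‖g‖ = 1)
    (hDdense : Dense (↑(Submodule.span ℝ D) : Set H))
    (μ : ℝ) (hμlt : μ < 1 / 2)
    (hμ : ∀ g ∈ D, ∀ S : Finset H, ↑S ⊆ D → g ∉ S →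
      ∑ h ∈ S, |⟪h, g⟫| ≤ μ)
    (N : ℕ) (g : Fin N → H) (hgD : ∀ ν, g ν ∈ D)
    (hginj : Function.Injective g) (c : Fin N → ℝ) :
    (1 - 2 * μ) * ∑ ν, (c ν) ^ 2 ≤ ‖∑ ν, c ν • g ν‖ ^ 2 ∧
      ‖∑ ν, c ν • g ν‖ ^ 2 ≤ (1 + 2 * μ) * ∑ ν, (c ν) ^ 2 := by
  classical
  rcases Nat.eq_zero_or_pos N with hN | hN
  · subst hN; simp
  have hμ0 : 0 ≤ μ := by
    have := hμ (g ⟨0, hN⟩) (hgD _) ∅ (by simp) (by simp)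
    simpa using this
  set T := ∑ ν, (c ν) ^ 2 with hT
  have hT0 : 0 ≤ T := Finset.sum_nonneg fun ν _ => sq_nonneg _
  -- coherence bound for each ν
  have hcoh : ∀ ν : Fin N, ∑ ν' ∈ Finset.univ.erase ν, |⟪g ν', g ν⟫| ≤ μ := by
    intro ν
    have himg : ∑ ν' ∈ Finset.univ.erase ν, |⟪g ν', g ν⟫|
        = ∑ h ∈ (Finset.univ.erase ν).image g, |⟪h, g ν⟫| := by
      rw [Finset.sum_image]
      intro x _ y _ hxy; exact hginj hxy
    rw [himg]
    refine hμ (g ν) (hgD ν) _ ?_ ?_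
    · intro h hh
      simp only [Finset.coe_image, Set.mem_image] at hh
      obtain ⟨x, _, rfl⟩ := hh; exact hgD x
    · intro hmem
      simp only [Finset.mem_image, Finset.mem_erase] at hmem
      obtain ⟨x, ⟨hx, _⟩, hgx⟩ := hmem
      exact hx (hginj hgx)
  have hcoh' : ∀ ν : Fin N, ∑ ν' ∈ Finset.univ.erase ν, |⟪g ν, g ν'⟫| ≤ μ := by
    intro ν
    have : ∀ ν' : Fin N, |⟪g ν, g ν'⟫| = |⟪g ν', g ν⟫| := fun ν' => by
      rw [real_inner_comm]
    simp only [this]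
    exact hcoh ν
  -- expansion
  have hexp : ‖∑ ν, c ν • g ν‖ ^ 2
      = ∑ ν, ∑ ν', c ν * c ν' * ⟪g ν, g ν'⟫ := by
    rw [← real_inner_self_eq_norm_sq]
    rw [sum_inner]
    refine Finset.sum_congr rfl fun ν _ => ?_
    rw [inner_sum]
    refine Finset.sum_congr rfl fun ν' _ => ?_
    rw [real_inner_smul_left, real_inner_smul_right]; ring
  set E := ∑ ν, ∑ ν' ∈ Finset.univ.erase ν, c ν * c ν' * ⟪g ν, g ν'⟫ with hE
  have hsplit : ‖∑ ν, c ν • g ν‖ ^ 2 = T + E := by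
    rw [hexp, hT, hE, ← Finset.sum_add_distrib]
    refine Finset.sum_congr rfl fun ν _ => ?_
    have hdiag : ⟪g ν, g ν⟫ = 1 := by
      rw [real_inner_self_eq_norm_sq, hDnorm _ (hgD ν)]; norm_num
    rw [← Finset.add_sum_erase _ _ (Finset.mem_univ ν), hdiag]
    ring
  have habs : |E| ≤ μ * T := by
    have h1 : |E| ≤ ∑ ν, ∑ ν' ∈ Finset.univ.erase ν,
        ((c ν)^2 + (c ν')^2) / 2 * |⟪g ν, g ν'⟫| := by
      refine (Finset.abs_sum_le_sum_abs _ _).trans ?_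
      refine Finset.sum_le_sum fun ν _ => ?_
      refine (Finset.abs_sum_le_sum_abs _ _).trans ?_
      refine Finset.sum_le_sum fun ν' _ => ?_
      rw [abs_mul, abs_mul]
      have h2 : |c ν| * |c ν'| ≤ ((c ν)^2 + (c ν')^2) / 2 := by
        nlinarith [sq_nonneg (|c ν| - |c ν'|), sq_abs (c ν), sq_abs (c ν')]
      exact mul_le_mul_of_nonneg_right h2 (abs_nonneg _)
    have hsum : ∑ ν, ∑ ν' ∈ Finset.univ.erase ν,
        ((c ν)^2 + (c ν')^2) / 2 * |⟪g ν, g ν'⟫|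
        = (∑ ν, ∑ ν' ∈ Finset.univ.erase ν, (c ν)^2 / 2 * |⟪g ν, g ν'⟫|)
        + ∑ ν, ∑ ν' ∈ Finset.univ.erase ν, (c ν')^2 / 2 * |⟪g ν, g ν'⟫| := by
      rw [← Finset.sum_add_distrib]
      refine Finset.sum_congr rfl fun ν _ => ?_
      rw [← Finset.sum_add_distrib]
      refine Finset.sum_congr rfl fun ν' _ => ?_
      ring
    have hswap : ∑ ν, ∑ ν' ∈ Finset.univ.erase ν, (c ν')^2 / 2 * |⟪g ν, g ν'⟫|
        = ∑ ν', ∑ ν ∈ Finset.univ.erase ν', (c ν')^2 / 2 * |⟪g ν, g ν'⟫| := by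
      rw [Finset.sum_comm' (s' := fun ν' => Finset.univ.erase ν') (t' := Finset.univ)]
      intro x y
      simp only [Finset.mem_univ, Finset.mem_erase, true_and, and_true]
      exact ne_comm
    have hb1 : ∑ ν, ∑ ν' ∈ Finset.univ.erase ν, (c ν)^2 / 2 * |⟪g ν, g ν'⟫|
        ≤ μ / 2 * T := by
      rw [hT, Finset.mul_sum]
      refine Finset.sum_le_sum fun ν _ => ?_
      rw [← Finset.mul_sum]
      have := hcoh' ν
      have h0 : (0:ℝ) ≤ (c ν)^2 / 2 := by positivity
      calc (c ν)^2 / 2 * ∑ ν' ∈ Finset.univ.erase ν, |⟪g ν, g ν'⟫|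
          ≤ (c ν)^2 / 2 * μ := mul_le_mul_of_nonneg_left this h0
        _ = μ / 2 * (c ν)^2 := by ring
    have hb2 : ∑ ν', ∑ ν ∈ Finset.univ.erase ν', (c ν')^2 / 2 * |⟪g ν, g ν'⟫|
        ≤ μ / 2 * T := by
      rw [hT, Finset.mul_sum]
      refine Finset.sum_le_sum fun ν' _ => ?_
      rw [← Finset.mul_sum]
      have := hcoh ν'
      have h0 : (0:ℝ) ≤ (c ν')^2 / 2 := by positivity
      calc (c ν')^2 / 2 * ∑ ν ∈ Finset.univ.erase ν', |⟪g ν, g ν'⟫|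
          ≤ (c ν')^2 / 2 * μ := mul_le_mul_of_nonneg_left this h0
        _ = μ / 2 * (c ν')^2 := by ring
    calc |E| ≤ _ := h1
      _ = _ := hsum
      _ ≤ μ / 2 * T + μ / 2 * T := by rw [hswap]; exact add_le_add hb1 hb2
      _ = μ * T := by ring
  rw [hsplit]
  have h1 := abs_le.mp habs
  have hμT : μ * T ≤ 2 * μ * T := by nlinarith
  constructor <;> nlinarith [h1.1, h1.2]
end

section
/- Only the upper bound of the quasi-orthogonality estimate: if D is a dictionary with cumulative coherence μ₁(D) < ∞, then for any finite set of distinct g¹,…,g^N ∈ D and reals c_ν, ‖Σ c_ν g^ν‖² ≤ (1 + 2μ₁(D)) Σ c_ν². -/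
/-!
Expanding the square gives the Gram form `Σ_{ν,ν'} c_ν c_ν' ⟪g^ν, g^ν'⟫`. Bounding
`c_ν c_ν' ≤ (c_ν² + c_ν'²)/2` (Schur's test) controls it by the largest row sum of
`|⟪g^ν, g^ν'⟫|`, which is `1` from the diagonal plus at most `μ₁(D)` off it.
This even yields the constant `1 + μ₁(D) ≤ 1 + 2μ₁(D)`.
-/

open RealInnerProductSpace Finset

theorem sum_mul_mul_le_of_sum_abs_le {ι : Type*} [Fintype ι] (a : ι → ι → ℝ)
    (ha : ∀ i j, a i j = a j i) (M : ℝ) (hM : ∀ i, ∑ j, |a i j| ≤ M) (c : ι → ℝ) :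
    ∑ i, ∑ j, c i * c j * a i j ≤ M * ∑ i, c i ^ 2 := by
  have hterm : ∀ i j, c i * c j * a i j ≤ c i ^ 2 / 2 * |a i j| + c j ^ 2 / 2 * |a j i| := by
    intro i j
    calc c i * c j * a i j ≤ |c i| * |c j| * |a i j| := by
          rw [← abs_mul, ← abs_mul]; exact le_abs_self _
      _ ≤ (c i ^ 2 / 2 + c j ^ 2 / 2) * |a i j| := by
          gcongr
          nlinarith [sq_nonneg (|c i| - |c j|), sq_abs (c i), sq_abs (c j)]
      _ = c i ^ 2 / 2 * |a i j| + c j ^ 2 / 2 * |a j i| := by rw [ha j i]; ring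
  have hrow : ∀ i, ∑ j, c i ^ 2 / 2 * |a i j| ≤ c i ^ 2 / 2 * M := fun i => by
    rw [← mul_sum]; exact mul_le_mul_of_nonneg_left (hM i) (by positivity)
  calc ∑ i, ∑ j, c i * c j * a i j
      ≤ ∑ i, ∑ j, (c i ^ 2 / 2 * |a i j| + c j ^ 2 / 2 * |a j i|) :=
        sum_le_sum fun i _ => sum_le_sum fun j _ => hterm i j
    _ = 2 * ∑ i, ∑ j, c i ^ 2 / 2 * |a i j| := by
        simp only [sum_add_distrib]
        rw [sum_comm (f := fun i j => c j ^ 2 / 2 * |a j i|)]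
        ring
    _ ≤ 2 * ∑ i, c i ^ 2 / 2 * M := by gcongr with i; exact hrow i
    _ = M * ∑ i, c i ^ 2 := by rw [mul_sum, mul_sum]; exact sum_congr rfl fun i _ => by ring

theorem norm_sum_smul_sq {H ι : Type*} [NormedAddCommGroup H] [InnerProductSpace ℝ H]
    [Fintype ι] (v : ι → H) (c : ι → ℝ) :
    ‖∑ i, c i • v i‖ ^ 2 = ∑ i, ∑ j, c i * c j * ⟪v i, v j⟫ := by
  rw [← real_inner_self_eq_norm_sq, sum_inner]
  refine sum_congr rfl fun i _ => ?_
  rw [inner_sum]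
  refine sum_congr rfl fun j _ => ?_
  rw [real_inner_smul_left, real_inner_smul_right]
  ring

theorem sum_abs_inner_le_one_add {H ι : Type*} [NormedAddCommGroup H] [InnerProductSpace ℝ H]
    [Fintype ι] (D : Set H) (hDnorm : ∀ g ∈ D, ‖g‖ = 1) (μ : ℝ)
    (hμ : ∀ g ∈ D, ∀ S : Finset H, ↑S ⊆ D → g ∉ S → ∑ h ∈ S, |⟪h, g⟫| ≤ μ)
    (g : ι → H) (hgD : ∀ i, g i ∈ D) (hginj : Function.Injective g) (i : ι) :
    ∑ j, |⟪g i, g j⟫| ≤ 1 + μ := by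
  classical
  have hdiag : |⟪g i, g i⟫| = 1 := by
    rw [real_inner_self_eq_norm_sq, hDnorm _ (hgD i)]; norm_num
  have hoff : ∑ j ∈ univ.erase i, |⟪g j, g i⟫| ≤ μ := by
    have hsub : ↑((univ.erase i).image g) ⊆ D := by
      simp only [coe_image, Set.image_subset_iff]
      exact fun j _ => hgD j
    have hnotmem : g i ∉ (univ.erase i).image g := by
      simp only [mem_image, mem_erase, not_exists]
      exact fun j ⟨⟨hji, _⟩, hgj⟩ => hji (hginj hgj)
    simpa only [sum_image fun _ _ _ _ h => hginj h] using hμ (g i) (hgD i) _ hsub hnotmem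
  rw [← add_sum_erase _ _ (mem_univ i), hdiag]
  simp only [real_inner_comm (g i)] at hoff
  linarith

theorem quasi_orthogonality_upper_general
    {H : Type*} [NormedAddCommGroup H] [InnerProductSpace ℝ H]
    (D : Set H) (hDnorm : ∀ g ∈ D, ‖g‖ = 1)
    (μ : ℝ)
    (hμ : ∀ g ∈ D, ∀ S : Finset H, ↑S ⊆ D → g ∉ S →
      ∑ h ∈ S, |⟪h, g⟫| ≤ μ)
    (N : ℕ) (g : Fin N → H) (hgD : ∀ ν, g ν ∈ D)
    (hginj : Function.Injective g) (c : Fin N → ℝ) :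
    ‖∑ ν, c ν • g ν‖ ^ 2 ≤ (1 + 2 * μ) * ∑ ν, (c ν) ^ 2 := by
  rcases Nat.eq_zero_or_pos N with rfl | hN
  · simp
  have hμ0 : 0 ≤ μ := by simpa using hμ (g ⟨0, hN⟩) (hgD _) ∅ (by simp) (by simp)
  calc ‖∑ ν, c ν • g ν‖ ^ 2 = ∑ ν, ∑ ν', c ν * c ν' * ⟪g ν, g ν'⟫ := norm_sum_smul_sq g c
    _ ≤ (1 + μ) * ∑ ν, c ν ^ 2 :=
        sum_mul_mul_le_of_sum_abs_le _ (fun _ _ => real_inner_comm _ _) _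
          (sum_abs_inner_le_one_add D hDnorm μ hμ g hgD hginj) c
    _ ≤ (1 + 2 * μ) * ∑ ν, c ν ^ 2 := by gcongr; linarith

/-- Upper bound of the quasi-orthogonality estimate: for a set of unit vectors
with cumulative coherence bounded by `μ < ∞`,
`‖Σ c g‖² ≤ (1+2μ)Σc²`. -/
theorem quasi_orthogonality_upper
    {H : Type*} [NormedAddCommGroup H] [InnerProductSpace ℝ H] [CompleteSpace H]
    (D : Set H) (hDnorm : ∀ g ∈ D, ‖g‖ = 1)
    (hDdense : Dense (↑(Submodule.span ℝ D) : Set H))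
    (μ : ℝ)
    (hμ : ∀ g ∈ D, ∀ S : Finset H, ↑S ⊆ D → g ∉ S →
      ∑ h ∈ S, |⟪h, g⟫| ≤ μ)
    (N : ℕ) (g : Fin N → H) (hgD : ∀ ν, g ν ∈ D)
    (hginj : Function.Injective g) (c : Fin N → ℝ) :
    ‖∑ ν, c ν • g ν‖ ^ 2 ≤ (1 + 2 * μ) * ∑ ν, (c ν) ^ 2 :=
  quasi_orthogonality_upper_general D hDnorm μ hμ N g hgD hginj c
end

section
/- Let D = {g^λ} be a dictionary with cumulative coherence μ₁(D), let Λ be a finite index set, ε > 0, and suppose f = f_ε + Σ_{λ∈Λ} c_λ g^λ with ‖f_ε‖ < ε (the g^λ distinct elements of D, c_λ ∈ ℝ). Then for any λ₀ ∈ Λ, |⟨f, g^{λ₀}⟩ − c_{λ₀}| < μ₁(D)·max_{λ∈Λ}|c_λ| + ε. -/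
open RealInnerProductSpace Finset

/-- Coefficient-perturbation lemma (Lemma 2, case `λ₀ ∈ Λ`): if
`f = f_ε + Σ_{λ∈Λ} c_λ g^λ` with `‖f_ε‖ < ε`, the `g^λ` distinct elements of a
dictionary with cumulative coherence bounded by `μ`, then
`|⟨f, g^{λ₀}⟩ - c_{λ₀}| < μ · max_{λ∈Λ}|c_λ| + ε`. -/
theorem inner_coefficient_estimate_mem
    {H : Type*} [NormedAddCommGroup H] [InnerProductSpace ℝ H] [CompleteSpace H]
    (D : Set H) (hDnorm : ∀ g ∈ D, ‖g‖ = 1)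
    (μ : ℝ)
    (hμ : ∀ g ∈ D, ∀ S : Finset H, ↑S ⊆ D → g ∉ S →
      ∑ h ∈ S, |⟪h, g⟫| ≤ μ)
    {ι : Type*} (Λ : Finset ι) (hΛ : Λ.Nonempty)
    (gl : ι → H) (hglD : ∀ l ∈ Λ, gl l ∈ D) (hinj : Set.InjOn gl ↑Λ)
    (c : ι → ℝ) (f fε : H) (ε : ℝ) (hε : ‖fε‖ < ε)
    (hrep : f = fε + ∑ l ∈ Λ, c l • gl l)
    (l₀ : ι) (hl₀ : l₀ ∈ Λ) :
    |⟪f, gl l₀⟫ - c l₀| < μ * (Λ.sup' hΛ fun l => |c l|) + ε := by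
  classical
  set g := gl l₀ with hg
  set M := Λ.sup' hΛ fun l => |c l| with hM
  have hMle : ∀ l ∈ Λ, |c l| ≤ M := fun l hl => by rw [hM]; exact Finset.le_sup' (fun l => |c l|) hl
  have hM0 : 0 ≤ M := le_trans (abs_nonneg _) (hMle l₀ hl₀)
  have hgD : g ∈ D := hglD l₀ hl₀
  have hgn : ‖g‖ = 1 := hDnorm g hgD
  -- the set S of other dictionary elements
  set S : Finset H := (Λ.erase l₀).image gl with hS
  have hSsub : ↑S ⊆ D := by
    intro x hx
    simp only [hS, Finset.coe_image, Set.mem_image] at hx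
    obtain ⟨l, hl, rfl⟩ := hx
    exact hglD l (Finset.mem_of_mem_erase hl)
  have hgS : g ∉ S := by
    simp only [hS, Finset.mem_image]
    rintro ⟨l, hl, hlg⟩
    exact (Finset.ne_of_mem_erase hl)
      (hinj (Finset.mem_coe.2 (Finset.mem_of_mem_erase hl)) hl₀ hlg)
  have hsumS : ∑ l ∈ Λ.erase l₀, |⟪gl l, g⟫| = ∑ h ∈ S, |⟪h, g⟫| := by
    rw [hS, Finset.sum_image]
    intro a ha b hb hab
    exact hinj (Finset.mem_coe.2 (Finset.mem_of_mem_erase ha))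
      (Finset.mem_coe.2 (Finset.mem_of_mem_erase hb)) hab
  have hμS : ∑ l ∈ Λ.erase l₀, |⟪gl l, g⟫| ≤ μ := hsumS ▸ hμ g hgD S hSsub hgS
  -- expand the inner product
  have hgg : ⟪g, g⟫ = 1 := by
    rw [real_inner_self_eq_norm_sq, hgn]; norm_num
  have hexp : ⟪f, g⟫ - c l₀ = ⟪fε, g⟫ + ∑ l ∈ Λ.erase l₀, c l * ⟪gl l, g⟫ := by
    rw [hrep, inner_add_left, sum_inner]
    simp only [real_inner_smul_left]
    rw [← Finset.add_sum_erase _ _ hl₀, hgg]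
    ring
  rw [hexp]
  have h1 : |⟪fε, g⟫| < ε := by
    calc |⟪fε, g⟫| ≤ ‖fε‖ * ‖g‖ := abs_real_inner_le_norm _ _
    _ = ‖fε‖ := by rw [hgn, mul_one]
    _ < ε := hε
  have h2 : |∑ l ∈ Λ.erase l₀, c l * ⟪gl l, g⟫| ≤ μ * M := by
    calc |∑ l ∈ Λ.erase l₀, c l * ⟪gl l, g⟫|
        ≤ ∑ l ∈ Λ.erase l₀, |c l * ⟪gl l, g⟫| := Finset.abs_sum_le_sum_abs _ _
      _ ≤ ∑ l ∈ Λ.erase l₀, M * |⟪gl l, g⟫| := by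
          refine Finset.sum_le_sum fun l hl => ?_
          rw [abs_mul]
          exact mul_le_mul_of_nonneg_right
            (hMle l (Finset.mem_of_mem_erase hl)) (abs_nonneg _)
      _ = M * ∑ l ∈ Λ.erase l₀, |⟪gl l, g⟫| := by rw [Finset.mul_sum]
      _ ≤ M * μ := mul_le_mul_of_nonneg_left hμS hM0
      _ = μ * M := mul_comm _ _
  calc |⟪fε, g⟫ + ∑ l ∈ Λ.erase l₀, c l * ⟪gl l, g⟫|
      ≤ |⟪fε, g⟫| + |∑ l ∈ Λ.erase l₀, c l * ⟪gl l, g⟫| := abs_add_le _ _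
    _ < ε + μ * M := add_lt_add_of_lt_of_le h1 h2
    _ = μ * M + ε := by ring
end

section
/- Let D be a dictionary with μ₁(D) < 1/3, let f = f_ε + Σ_{λ∈Λ} c_λ g^λ with ‖f_ε‖ < ε where Λ is finite, and assume ε < (1/6)(1 − 3μ₁(D)) max_{λ∈Λ}|c_λ|. If g ∈ D attains the supremum sup_{g̃∈D}|⟨f,g̃⟩| = |⟨f,g⟩|, then g = g^{λ₀} for some λ₀ ∈ Λ; that is, the greedy step of the Pure Greedy Algorithm selects a dictionary element appearing in the representation of f. -/
open RealInnerProductSpace Finset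

/-- With coherence `μ₁(D) < 1/3` and small perturbation `ε`, the greedy step
selects a dictionary element appearing in the representation of `f`. -/
theorem greedy_selects_in_support
    {H : Type*} [NormedAddCommGroup H] [InnerProductSpace ℝ H] [CompleteSpace H]
    (D : Set H) (hDnorm : ∀ g ∈ D, ‖g‖ = 1)
    (μ : ℝ) (hμlt : μ < 1 / 3)
    (hμ : ∀ g ∈ D, ∀ S : Finset H, ↑S ⊆ D → g ∉ S →
      ∑ h ∈ S, |⟪h, g⟫| ≤ μ)
    {ι : Type*} (Λ : Finset ι) (hΛ : Λ.Nonempty)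
    (gl : ι → H) (hglD : ∀ l ∈ Λ, gl l ∈ D) (hinj : Set.InjOn gl ↑Λ)
    (c : ι → ℝ) (f fε : H) (ε : ℝ) (hε : ‖fε‖ < ε)
    (hrep : f = fε + ∑ l ∈ Λ, c l • gl l)
    (hεsmall : ε < (1 / 6) * (1 - 3 * μ) * (Λ.sup' hΛ fun l => |c l|))
    (g : H) (hgD : g ∈ D) (hsup : ∀ g' ∈ D, |⟪f, g'⟫| ≤ |⟪f, g⟫|) :
    ∃ l₀ ∈ Λ, g = gl l₀ := by
  classical
  by_contra hcon
  push_neg at hcon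
  set M := Λ.sup' hΛ fun l => |c l| with hMdef
  obtain ⟨ls, hls, hcs⟩ := Λ.exists_mem_eq_sup' hΛ fun l => |c l|
  have hμ3 : 0 < 1 - 3 * μ := by linarith
  have hε0 : 0 < ε := lt_of_le_of_lt (norm_nonneg fε) hε
  have hM0 : 0 < M := by nlinarith
  have hμ0 : 0 ≤ μ := by
    have := hμ g hgD ∅ (by simp) (by simp)
    simpa using this
  have hexp : ∀ g' : H, ⟪f, g'⟫ = ⟪fε, g'⟫ + ∑ l ∈ Λ, c l * ⟪gl l, g'⟫ := by
    intro g'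
    rw [hrep, inner_add_left, sum_inner]
    simp [real_inner_smul_left]
  have hfε : ∀ g' ∈ D, |⟪fε, g'⟫| ≤ ε := by
    intro g' hg'
    calc |⟪fε, g'⟫| ≤ ‖fε‖ * ‖g'‖ := abs_real_inner_le_norm _ _
      _ = ‖fε‖ := by rw [hDnorm g' hg', mul_one]
      _ ≤ ε := hε.le
  have hcl : ∀ l ∈ Λ, |c l| ≤ M := fun l hl => Finset.le_sup' (fun l => |c l|) hl
  have hsum : ∀ g' ∈ D, ∀ Λ' : Finset ι, Λ' ⊆ Λ → (∀ l ∈ Λ', gl l ≠ g') →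
      ∑ l ∈ Λ', |c l * ⟪gl l, g'⟫| ≤ M * μ := by
    intro g' hg' Λ' hΛ' hne
    have h1 : ∑ l ∈ Λ', |c l * ⟪gl l, g'⟫| ≤ ∑ l ∈ Λ', M * |⟪gl l, g'⟫| := by
      apply Finset.sum_le_sum
      intro l hl
      rw [abs_mul]
      exact mul_le_mul_of_nonneg_right (hcl l (hΛ' hl)) (abs_nonneg _)
    have h2 : ∑ l ∈ Λ', |⟪gl l, g'⟫| ≤ μ := by
      have himg : ∑ h ∈ Λ'.image gl, |⟪h, g'⟫| = ∑ l ∈ Λ', |⟪gl l, g'⟫| :=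
        Finset.sum_image (fun x hx y hy h => hinj (hΛ' hx) (hΛ' hy) h)
      rw [← himg]
      apply hμ g' hg'
      · intro h hh
        simp only [coe_image, Set.mem_image, mem_coe] at hh
        obtain ⟨l, hl, rfl⟩ := hh
        exact hglD l (hΛ' hl)
      · intro hmem
        obtain ⟨l, hl, hgl⟩ := Finset.mem_image.mp hmem
        exact hne l hl hgl
    calc ∑ l ∈ Λ', |c l * ⟪gl l, g'⟫| ≤ ∑ l ∈ Λ', M * |⟪gl l, g'⟫| := h1
      _ = M * ∑ l ∈ Λ', |⟪gl l, g'⟫| := by rw [Finset.mul_sum]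
      _ ≤ M * μ := mul_le_mul_of_nonneg_left h2 hM0.le
  have hgsD : gl ls ∈ D := hglD ls hls
  -- lower bound at gl ls
  have hlow : M - M * μ - ε ≤ |⟪f, gl ls⟫| := by
    have hsplit : ∑ l ∈ Λ, c l * ⟪gl l, gl ls⟫
        = c ls * ⟪gl ls, gl ls⟫ + ∑ l ∈ Λ.erase ls, c l * ⟪gl l, gl ls⟫ :=
      (Finset.add_sum_erase _ _ hls).symm
    have hself : ⟪gl ls, gl ls⟫ = 1 := by
      rw [real_inner_self_eq_norm_sq, hDnorm _ hgsD]; norm_num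
    have htail : |∑ l ∈ Λ.erase ls, c l * ⟪gl l, gl ls⟫| ≤ M * μ := by
      refine le_trans (Finset.abs_sum_le_sum_abs _ _) ?_
      refine hsum (gl ls) hgsD (Λ.erase ls) (Finset.erase_subset _ _) ?_
      intro l hl h
      exact (Finset.ne_of_mem_erase hl)
        (hinj (Finset.mem_of_mem_erase hl) hls h)
    have heq : c ls = ⟪f, gl ls⟫ - ⟪fε, gl ls⟫
        - ∑ l ∈ Λ.erase ls, c l * ⟪gl l, gl ls⟫ := by
      rw [hexp (gl ls), hsplit, hself]; ring
    have habs : |c ls| ≤ |⟪f, gl ls⟫| + |⟪fε, gl ls⟫|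
        + |∑ l ∈ Λ.erase ls, c l * ⟪gl l, gl ls⟫| := by
      rw [heq]
      exact le_trans (abs_sub _ _) (by gcongr; exact abs_sub _ _)
    have hfεs := hfε (gl ls) hgsD
    rw [← hMdef] at hcs
    rw [← hcs] at habs
    linarith
  -- upper bound at g
  have hup : |⟪f, g⟫| ≤ ε + M * μ := by
    have htail : |∑ l ∈ Λ, c l * ⟪gl l, g⟫| ≤ M * μ := by
      refine le_trans (Finset.abs_sum_le_sum_abs _ _) ?_
      exact hsum g hgD Λ le_rfl (fun l hl h => hcon l hl h.symm)
    rw [hexp g]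
    refine le_trans (abs_add_le _ _) ?_
    have := hfε g hgD
    linarith
  have hfinal := hsup (gl ls) hgsD
  nlinarith
end

section
/- Let D be a dictionary with μ₁(D) < 1/3, f = f_ε + Σ_{λ∈Λ} c_λ g^λ with ‖f_ε‖ < ε, Λ finite, and ε < (1/6)(1 − 3μ₁(D)) max_{λ∈Λ}|c_λ|. If λ₀ ∈ Λ is the index selected by one greedy step (|⟨f,g^{λ₀}⟩| = sup_{g∈D}|⟨f,g⟩|) and c_{λ₀} ≥ 0, then ⟨f, g^{λ₀}⟩ ≥ (1/2)(1 − 3μ₁(D)) max_{λ∈Λ}|c_λ|. -/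
open RealInnerProductSpace Finset

/-- With `μ₁(D) < 1/3` and small `ε`, if the greedy step selects `g^{λ₀}` with
`c_{λ₀} ≥ 0`, then `⟨f, g^{λ₀}⟩ ≥ (1/2)(1-3μ) max_{λ∈Λ}|c_λ|`. -/
theorem greedy_inner_lower_bound
    {H : Type*} [NormedAddCommGroup H] [InnerProductSpace ℝ H] [CompleteSpace H]
    (D : Set H) (hDnorm : ∀ g ∈ D, ‖g‖ = 1)
    (μ : ℝ) (hμlt : μ < 1 / 3)
    (hμ : ∀ g ∈ D, ∀ S : Finset H, ↑S ⊆ D → g ∉ S →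
      ∑ h ∈ S, |⟪h, g⟫| ≤ μ)
    {ι : Type*} (Λ : Finset ι) (hΛ : Λ.Nonempty)
    (gl : ι → H) (hglD : ∀ l ∈ Λ, gl l ∈ D) (hinj : Set.InjOn gl ↑Λ)
    (c : ι → ℝ) (f fε : H) (ε : ℝ) (hε : ‖fε‖ < ε)
    (hrep : f = fε + ∑ l ∈ Λ, c l • gl l)
    (hεsmall : ε < (1 / 6) * (1 - 3 * μ) * (Λ.sup' hΛ fun l => |c l|))
    (l₀ : ι) (hl₀ : l₀ ∈ Λ)
    (hsup : ∀ g' ∈ D, |⟪f, g'⟫| ≤ |⟪f, gl l₀⟫|)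
    (hc₀ : 0 ≤ c l₀) :
    (1 / 2) * (1 - 3 * μ) * (Λ.sup' hΛ fun l => |c l|) ≤ ⟪f, gl l₀⟫ := by
  classical
  set M := Λ.sup' hΛ fun l => |c l| with hMdef
  have hμ0 : 0 ≤ μ := by
    have := hμ (gl l₀) (hglD _ hl₀) ∅ (by simp) (by simp)
    simpa using this
  have hM : ∀ l ∈ Λ, |c l| ≤ M := fun l hl => Finset.le_sup' (fun l => |c l|) hl
  have hM0 : 0 ≤ M := le_trans (abs_nonneg _) (hM _ hl₀)
  have hε0 : 0 < ε := lt_of_le_of_lt (norm_nonneg _) hε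
  have hMpos : 0 < M := by nlinarith
  -- key bound: for each l ∈ Λ, |⟪f, gl l⟫ - c l| ≤ ε + μ * M
  have key : ∀ l ∈ Λ, |⟪f, gl l⟫ - c l| ≤ ε + μ * M := by
    intro l hl
    have hrepin : ⟪f, gl l⟫ = ⟪fε, gl l⟫ + ∑ k ∈ Λ, c k * ⟪gl k, gl l⟫ := by
      rw [hrep, inner_add_left, sum_inner]
      simp [real_inner_smul_left]
    have hself : ⟪gl l, gl l⟫ = (1 : ℝ) := by
      rw [real_inner_self_eq_norm_sq, hDnorm _ (hglD _ hl)]; norm_num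
    have hsplit : ∑ k ∈ Λ, c k * ⟪gl k, gl l⟫
        = c l + ∑ k ∈ Λ.erase l, c k * ⟪gl k, gl l⟫ := by
      rw [← Finset.add_sum_erase _ _ hl, hself, mul_one]
    have heq : ⟪f, gl l⟫ - c l
        = ⟪fε, gl l⟫ + ∑ k ∈ Λ.erase l, c k * ⟪gl k, gl l⟫ := by
      rw [hrepin, hsplit]; ring
    have hfε : |⟪fε, gl l⟫| ≤ ε := by
      have := abs_real_inner_le_norm fε (gl l)
      rw [hDnorm _ (hglD _ hl)] at this
      linarith [this]
    -- bound the cross sum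
    have hsuminj : Set.InjOn gl ↑(Λ.erase l) := hinj.mono (by
      intro x hx; exact Finset.mem_of_mem_erase (by exact_mod_cast hx))
    have hcoh : ∑ k ∈ Λ.erase l, |⟪gl k, gl l⟫| ≤ μ := by
      have himg : ∑ h ∈ (Λ.erase l).image gl, |⟪h, gl l⟫|
          = ∑ k ∈ Λ.erase l, |⟪gl k, gl l⟫| := Finset.sum_image (fun x hx y hy h =>
            hsuminj (by exact_mod_cast hx) (by exact_mod_cast hy) h)
      rw [← himg]
      apply hμ (gl l) (hglD _ hl)
      · intro x hx
        simp only [Finset.coe_image, Set.mem_image, Finset.mem_coe] at hx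
        obtain ⟨k, hk, rfl⟩ := hx
        exact hglD _ (Finset.mem_of_mem_erase hk)
      · intro hmem
        obtain ⟨k, hk, hkeq⟩ := Finset.mem_image.mp hmem
        have : k = l := hinj (Finset.mem_of_mem_erase hk) hl hkeq
        exact (Finset.ne_of_mem_erase hk) this
    have hsum : |∑ k ∈ Λ.erase l, c k * ⟪gl k, gl l⟫| ≤ μ * M := by
      calc |∑ k ∈ Λ.erase l, c k * ⟪gl k, gl l⟫|
          ≤ ∑ k ∈ Λ.erase l, |c k * ⟪gl k, gl l⟫| := Finset.abs_sum_le_sum_abs _ _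
        _ ≤ ∑ k ∈ Λ.erase l, M * |⟪gl k, gl l⟫| := by
            apply Finset.sum_le_sum
            intro k hk
            rw [abs_mul]
            exact mul_le_mul_of_nonneg_right (hM _ (Finset.mem_of_mem_erase hk))
              (abs_nonneg _)
        _ = M * ∑ k ∈ Λ.erase l, |⟪gl k, gl l⟫| := by rw [Finset.mul_sum]
        _ ≤ M * μ := mul_le_mul_of_nonneg_left hcoh hM0
        _ = μ * M := mul_comm _ _
    calc |⟪f, gl l⟫ - c l| = |⟪fε, gl l⟫ + ∑ k ∈ Λ.erase l, c k * ⟪gl k, gl l⟫| := by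
          rw [heq]
      _ ≤ |⟪fε, gl l⟫| + |∑ k ∈ Λ.erase l, c k * ⟪gl k, gl l⟫| := abs_add_le _ _
      _ ≤ ε + μ * M := add_le_add hfε hsum
  -- pick a maximizer
  obtain ⟨ls, hls, hlsM⟩ := Finset.exists_mem_eq_sup' hΛ fun l => |c l|
  have hkeyls := key ls hls
  have hlower : M - (ε + μ * M) ≤ |⟪f, gl ls⟫| := by
    have h1 : |c ls| - |⟪f, gl ls⟫ - c ls| ≤ |⟪f, gl ls⟫| := by
      have := abs_sub_abs_le_abs_sub (c ls) ⟪f, gl ls⟫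
      rw [abs_sub_comm] at this
      linarith
    have hMls : M = |c ls| := hlsM
    linarith
  have hsup0 : M - (ε + μ * M) ≤ |⟪f, gl l₀⟫| :=
    le_trans hlower (hsup _ (hglD _ hls))
  have hkey0 := key l₀ hl₀
  have hlow0 : -(ε + μ * M) ≤ ⟪f, gl l₀⟫ := by
    have := abs_le.mp hkey0
    linarith [this.1]
  rcases abs_cases (⟪f, gl l₀⟫ : ℝ) with ⟨h1, h2⟩ | ⟨h1, h2⟩
  · rw [h1] at hsup0
    nlinarith
  · rw [h1] at hsup0
    nlinarith
end

section
/- Let D be a dictionary with μ₁(D) < 1/3, f = f_ε + Σ_{λ∈Λ} c_λ g^λ with ‖f_ε‖ < ε, Λ finite, ε < (1/6)(1 − 3μ₁(D)) max_{λ∈Λ}|c_λ|. Let λ₀ ∈ Λ satisfy |⟨f,g^{λ₀}⟩| = sup_{g∈D}|⟨f,g⟩| and assume c_{λ₀} ≥ 0. Then |c_{λ₀} − ⟨f,g^{λ₀}⟩| + (1/2)(1 − 3μ₁(D)) max_{λ∈Λ}|c_λ| ≤ c_{λ₀}. -/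
open RealInnerProductSpace Finset

/-- With `μ₁(D) < 1/3` and small `ε`, if the greedy step selects `g^{λ₀}` with
`c_{λ₀} ≥ 0`, then
`|c_{λ₀} - ⟨f,g^{λ₀}⟩| + (1/2)(1-3μ) max_{λ∈Λ}|c_λ| ≤ c_{λ₀}`. -/
theorem greedy_coefficient_decrease_key
    {H : Type*} [NormedAddCommGroup H] [InnerProductSpace ℝ H] [CompleteSpace H]
    (D : Set H) (hDnorm : ∀ g ∈ D, ‖g‖ = 1)
    (μ : ℝ) (hμlt : μ < 1 / 3)
    (hμ : ∀ g ∈ D, ∀ S : Finset H, ↑S ⊆ D → g ∉ S →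
      ∑ h ∈ S, |⟪h, g⟫| ≤ μ)
    {ι : Type*} (Λ : Finset ι) (hΛ : Λ.Nonempty)
    (gl : ι → H) (hglD : ∀ l ∈ Λ, gl l ∈ D) (hinj : Set.InjOn gl ↑Λ)
    (c : ι → ℝ) (f fε : H) (ε : ℝ) (hε : ‖fε‖ < ε)
    (hrep : f = fε + ∑ l ∈ Λ, c l • gl l)
    (hεsmall : ε < (1 / 6) * (1 - 3 * μ) * (Λ.sup' hΛ fun l => |c l|))
    (l₀ : ι) (hl₀ : l₀ ∈ Λ)
    (hsup : ∀ g' ∈ D, |⟪f, g'⟫| ≤ |⟪f, gl l₀⟫|)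
    (hc₀ : 0 ≤ c l₀) :
    |c l₀ - ⟪f, gl l₀⟫| + (1 / 2) * (1 - 3 * μ) * (Λ.sup' hΛ fun l => |c l|)
      ≤ c l₀ := by
  classical
  set M := Λ.sup' hΛ fun l => |c l| with hM
  have hMnonneg : 0 ≤ M := le_trans (abs_nonneg (c l₀)) (Finset.le_sup' (fun l => |c l|) hl₀)
  have hεpos : 0 < ε := lt_of_le_of_lt (norm_nonneg _) hε
  have key : ∀ l ∈ Λ, |⟪f, gl l⟫ - c l| ≤ ε + μ * M := by
    intro l hl
    have h1 : ⟪f, gl l⟫ = ⟪fε, gl l⟫ + ∑ l' ∈ Λ, c l' * ⟪gl l', gl l⟫ := by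
      rw [hrep, inner_add_left, sum_inner]
      simp [real_inner_smul_left]
    have hnorm : ⟪gl l, gl l⟫ = 1 := by
      have := hDnorm _ (hglD l hl)
      rw [real_inner_self_eq_norm_sq, this]; norm_num
    have h2 : ⟪f, gl l⟫ - c l = ⟪fε, gl l⟫ + ∑ l' ∈ Λ.erase l, c l' * ⟪gl l', gl l⟫ := by
      rw [h1, ← Finset.add_sum_erase Λ _ hl, hnorm]; ring
    have hcoher : ∑ l' ∈ Λ.erase l, |⟪gl l', gl l⟫| ≤ μ := by
      have himg : ∑ h ∈ (Λ.erase l).image gl, |⟪h, gl l⟫|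
          = ∑ l' ∈ Λ.erase l, |⟪gl l', gl l⟫| := by
        apply Finset.sum_image
        intro x hx y hy hxy
        exact hinj (Λ.erase_subset l hx) (Λ.erase_subset l hy) hxy
      rw [← himg]
      apply hμ _ (hglD l hl)
      · intro h hh
        simp only [Finset.coe_image, Set.mem_image, Finset.mem_coe] at hh
        obtain ⟨x, hx, rfl⟩ := hh
        exact hglD x (Λ.erase_subset l hx)
      · intro hmem
        obtain ⟨x, hx, heq⟩ := Finset.mem_image.mp hmem
        exact (Finset.ne_of_mem_erase hx) (hinj (Λ.erase_subset l hx) hl heq)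
    have hfε : |⟪fε, gl l⟫| ≤ ε := by
      have h := abs_real_inner_le_norm fε (gl l)
      rw [hDnorm _ (hglD l hl)] at h
      nlinarith [h]
    have hsumbound : |∑ l' ∈ Λ.erase l, c l' * ⟪gl l', gl l⟫| ≤ μ * M := by
      calc |∑ l' ∈ Λ.erase l, c l' * ⟪gl l', gl l⟫|
          ≤ ∑ l' ∈ Λ.erase l, |c l' * ⟪gl l', gl l⟫| := Finset.abs_sum_le_sum_abs _ _
        _ ≤ ∑ l' ∈ Λ.erase l, M * |⟪gl l', gl l⟫| := by
            apply Finset.sum_le_sum; intro i hi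
            rw [abs_mul]
            exact mul_le_mul_of_nonneg_right
              (Finset.le_sup' (fun l => |c l|) (Λ.erase_subset l hi)) (abs_nonneg _)
        _ = M * ∑ l' ∈ Λ.erase l, |⟪gl l', gl l⟫| := by rw [Finset.mul_sum]
        _ ≤ M * μ := mul_le_mul_of_nonneg_left hcoher hMnonneg
        _ = μ * M := mul_comm _ _
    rw [h2]
    calc |⟪fε, gl l⟫ + ∑ l' ∈ Λ.erase l, c l' * ⟪gl l', gl l⟫|
        ≤ |⟪fε, gl l⟫| + |∑ l' ∈ Λ.erase l, c l' * ⟪gl l', gl l⟫| := abs_add_le _ _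
      _ ≤ ε + μ * M := add_le_add hfε hsumbound
  obtain ⟨l', hl', hMeq⟩ := Finset.exists_mem_eq_sup' hΛ fun l => |c l|
  have k0 := key l₀ hl₀
  have k1 := key l' hl'
  have hsup' := hsup (gl l') (hglD l' hl')
  have hM1 : M ≤ |⟪f, gl l'⟫| + (ε + μ * M) := by
    have h : |c l'| - |⟪f, gl l'⟫| ≤ |⟪f, gl l'⟫ - c l'| := by
      rw [abs_sub_comm]; exact abs_sub_abs_le_abs_sub _ _
    rw [hM, hMeq]
    rw [hM, hMeq] at k1
    linarith
  have hM2 : |⟪f, gl l₀⟫| ≤ c l₀ + (ε + μ * M) := by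
    have h : |⟪f, gl l₀⟫| - |c l₀| ≤ |⟪f, gl l₀⟫ - c l₀| := abs_sub_abs_le_abs_sub _ _
    rw [abs_of_nonneg hc₀] at h; linarith
  have habs : |c l₀ - ⟪f, gl l₀⟫| ≤ ε + μ * M := by rw [abs_sub_comm]; exact k0
  linarith
end

section
/- If D is a dictionary with μ₁(D) < 1/3 and f ∈ A¹(D), then the Pure Greedy Algorithm residuals satisfy ‖f − G_m^{PGA}(f,D)‖ = ‖f_m‖ ≤ |f|₁ m^{-1/2} for all m ≥ 1. -/
/-!
If `h = ∑ c_x x` with atoms `x ∈ D`, the greedy atom `g` for (a close approximation of) `h`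
satisfies `|⟪h, g⟫| ≳ (1 - μ) max |c_x|`, so it lies in the support, and for `μ ≤ 1/3` the
update `c_g ↦ c_g - ⟪h, g⟫` does not increase `∑ |c_x|`. Running the algorithm on an
`ℓ¹`-approximant `h₀` of `f` with the atoms chosen for `f` keeps `f_k - h_k = f - h₀`, so every
residual `f_k` lies in `A¹(D, N)` for all `N > |f|₁`. Hence
`‖f_k‖² = ⟪f_k, f_k⟫ ≤ |f|₁ |⟪f_k, g_{k+1}⟫|`, and with `‖f_{k+1}‖² = ‖f_k‖² - ⟪f_k, g_{k+1}⟫²`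
the sequence `a_k = ‖f_k‖²` obeys `|f|₁² a_{k+1} ≤ a_k (|f|₁² - a_k)`, whence
`a_k ≤ |f|₁² / (k + 1)`.
-/

open RealInnerProductSpace Finset

/-- The set of finite linear combinations `Σ_{g∈S} c_g g` of distinct
dictionary elements with `Σ_{g∈S} |c_g|^p ≤ M^p`. -/
def repSet {H : Type*} [NormedAddCommGroup H] [InnerProductSpace ℝ H]
    (D : Set H) (p M : ℝ) : Set H :=
  {h | ∃ (S : Finset H) (c : H → ℝ), ↑S ⊆ D ∧
    (∑ g ∈ S, |c g| ^ p) ≤ M ^ p ∧ h = ∑ g ∈ S, c g • g}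

/-- The class `A^p(D, M)` is the closure of `repSet D p M`. -/
def Aclass {H : Type*} [NormedAddCommGroup H] [InnerProductSpace ℝ H]
    (D : Set H) (p M : ℝ) : Set H :=
  closure (repSet D p M)

/-- The semi-norm `|f|_p = inf {M ≥ 0 : f ∈ A^p(D, M)}`. -/
noncomputable def Anorm {H : Type*} [NormedAddCommGroup H]
    [InnerProductSpace ℝ H] (D : Set H) (p : ℝ) (f : H) : ℝ :=
  sInf {M | 0 ≤ M ∧ f ∈ Aclass D p M}

theorem le_div_succ_of_mul_le_mul_sub {a : ℕ → ℝ} {A : ℝ} (hA : 0 ≤ A) (ha : ∀ k, 0 ≤ a k)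
    (hrec : ∀ k, A * a (k + 1) ≤ a k * (A - a k)) (k : ℕ) : a k ≤ A / (k + 1) := by
  rcases hA.eq_or_lt with rfl | hA
  · rw [zero_div]
    nlinarith [hrec k, ha k]
  induction k with
  | zero => simpa using (by nlinarith [ha 0, ha 1, hrec 0] : a 0 ≤ A)
  | succ n ih =>
    rw [le_div_iff₀ (by positivity)] at ih ⊢
    suffices a n * (A - a n) * (n + 2) ≤ A ^ 2 by
      push_cast
      nlinarith [hrec n]
    rcases n.eq_zero_or_pos with rfl | hn
    · norm_num
      nlinarith [sq_nonneg (A - 2 * a 0)]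
    · have hn1 : (1 : ℝ) ≤ n := by exact_mod_cast hn
      -- `(n+1)² (A² - (n+2) x (A-x)) = (n+2) (A - (n+1) x) (n A - (n+1) x) + A²` with `x = a n`
      have hprod := mul_nonneg (sub_nonneg.2 ih) (by nlinarith : 0 ≤ (n : ℝ) * A - a n * (n + 1))
      have hp : (0 : ℝ) < ((n : ℝ) + 1) ^ 2 := by positivity
      refine le_of_mul_le_mul_left ?_ hp
      nlinarith [mul_nonneg (by positivity : (0 : ℝ) ≤ n + 2) hprod]

section

variable {H : Type*} [NormedAddCommGroup H] [InnerProductSpace ℝ H] {D : Set H}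

def CumulativeCoherenceLE (D : Set H) (μ : ℝ) : Prop :=
  ∀ g ∈ D, ∀ S : Finset H, ↑S ⊆ D → g ∉ S → ∑ h ∈ S, |⟪h, g⟫| ≤ μ

structure IsPureGreedy (D : Set H) (fs gs : ℕ → H) : Prop where
  mem : ∀ m, gs (m + 1) ∈ D
  greedy : ∀ m, ∀ g ∈ D, |⟪fs m, g⟫| ≤ |⟪fs m, gs (m + 1)⟫|
  step : ∀ m, fs (m + 1) = fs m - ⟪fs m, gs (m + 1)⟫ • gs (m + 1)

theorem mem_repSet_one_iff {h : H} {N : ℝ} :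
    h ∈ repSet D 1 N ↔ ∃ (S : Finset H) (c : H → ℝ), ↑S ⊆ D ∧
      ∑ x ∈ S, |c x| ≤ N ∧ h = ∑ x ∈ S, c x • x := by
  simp only [repSet, Real.rpow_one, Set.mem_ofPred_eq]

theorem repSet_one_mono {M N : ℝ} (hMN : M ≤ N) : repSet D 1 M ⊆ repSet D 1 N := by
  intro h hh
  obtain ⟨S, c, hS, hsum, rfl⟩ := mem_repSet_one_iff.1 hh
  exact mem_repSet_one_iff.2 ⟨S, c, hS, hsum.trans hMN, rfl⟩

theorem exists_coeffs_of_subset {S T : Finset H} (hST : S ⊆ T) (c : H → ℝ) :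
    ∃ c' : H → ℝ, ∑ x ∈ T, |c' x| = ∑ x ∈ S, |c x| ∧
      ∑ x ∈ T, c' x • x = ∑ x ∈ S, c x • x := by
  classical
  refine ⟨fun x => if x ∈ S then c x else 0, ?_, ?_⟩ <;>
  · rw [← Finset.sum_subset hST (fun x _ hx => by simp [hx])]
    exact Finset.sum_congr rfl fun x hx => by simp [hx]

theorem abs_inner_sum_smul_sub_le (hDnorm : ∀ g ∈ D, ‖g‖ = 1) {μ : ℝ}
    (hμ : CumulativeCoherenceLE D μ) {S : Finset H} (hS : ↑S ⊆ D) {c : H → ℝ} {K : ℝ}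
    (hK : ∀ x ∈ S, |c x| ≤ K) {u : H} (hu : u ∈ S) : |⟪∑ x ∈ S, c x • x, u⟫ - c u| ≤ μ * K := by
  classical
  have huD : u ∈ D := hS hu
  have hK0 : 0 ≤ K := (abs_nonneg _).trans (hK u hu)
  have hsplit : ⟪∑ x ∈ S, c x • x, u⟫ - c u = ∑ x ∈ S.erase u, c x * ⟪x, u⟫ := by
    rw [sum_inner, ← Finset.add_sum_erase S _ hu, real_inner_smul_left,
      real_inner_self_eq_norm_sq, hDnorm u huD]
    simp only [real_inner_smul_left]
    ring
  have hcoh := hμ u huD (S.erase u) (fun x hx => hS (Finset.mem_of_mem_erase hx))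
    (Finset.notMem_erase u S)
  rw [hsplit]
  calc |∑ x ∈ S.erase u, c x * ⟪x, u⟫| ≤ ∑ x ∈ S.erase u, |c x| * |⟪x, u⟫| := by
        simpa only [abs_mul] using
          Finset.abs_sum_le_sum_abs (fun x => c x * ⟪x, u⟫) (S.erase u)
    _ ≤ ∑ x ∈ S.erase u, K * |⟪x, u⟫| := Finset.sum_le_sum fun x hx =>
        mul_le_mul_of_nonneg_right (hK x (Finset.mem_of_mem_erase hx)) (abs_nonneg _)
    _ ≤ μ * K := by rw [← Finset.mul_sum, mul_comm μ]; exact mul_le_mul_of_nonneg_left hcoh hK0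

theorem Finset.sum_apply_update_add {ι M : Type*} [DecidableEq ι] [AddCommMonoid M]
    {s : Finset ι} {i : ι} (hi : i ∈ s) (F : ι → ℝ → M) (c : ι → ℝ) (b : ℝ) :
    ∑ x ∈ s, F x (Function.update c i b x) + F i (c i) = ∑ x ∈ s, F x (c x) + F i b := by
  rw [← Finset.add_sum_erase s _ hi, ← Finset.add_sum_erase s (fun x => F x (c x)) hi,
    Function.update_self, Finset.sum_congr rfl fun x hx => by
      rw [Function.update_of_ne (Finset.ne_of_mem_erase hx)]]
  abel

theorem sub_inner_smul_mem_repSet (hDnorm : ∀ g ∈ D, ‖g‖ = 1) {μ : ℝ}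
    (hμ : CumulativeCoherenceLE D μ) (hμ_le : μ ≤ 1 / 3) {v g h : H} {N δ : ℝ}
    (hh : h ∈ repSet D 1 N) (hvh : ‖v - h‖ ≤ δ)
    (hg : g ∈ D) (hgreedy : ∀ x ∈ D, |⟪v, x⟫| ≤ |⟪v, g⟫|) :
    h - ⟪v, g⟫ • g ∈ repSet D 1 (N + 3 * δ) := by
  classical
  obtain ⟨S₀, c₀, hS₀, hsum₀, rfl⟩ := mem_repSet_one_iff.1 hh
  obtain ⟨c, hsum_eq, hrep_eq⟩ := exists_coeffs_of_subset (Finset.subset_insert g S₀) c₀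
  set S := insert g S₀
  have hS : ↑S ⊆ D := by rw [Finset.coe_insert]; exact Set.insert_subset hg hS₀
  have hgS : g ∈ S := Finset.mem_insert_self g S₀
  rw [← hsum_eq] at hsum₀
  rw [← hrep_eq] at hvh ⊢
  obtain ⟨l, hlS, hlmax⟩ := S.exists_max_image (fun x => |c x|) ⟨g, hgS⟩
  have hcoef : ∀ u ∈ S, |⟪v, u⟫ - c u| ≤ μ * |c l| + δ := by
    intro u hu
    have herr : |⟪v - ∑ x ∈ S, c x • x, u⟫| ≤ δ := by
      refine (abs_real_inner_le_norm _ _).trans ?_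
      rwa [hDnorm u (hS hu), mul_one]
    calc |⟪v, u⟫ - c u|
        = |(⟪∑ x ∈ S, c x • x, u⟫ - c u) + ⟪v - ∑ x ∈ S, c x • x, u⟫| := by
          rw [inner_sub_left]; ring_nf
      _ ≤ μ * |c l| + δ := (abs_add_le _ _).trans
          (add_le_add (abs_inner_sum_smul_sub_le hDnorm hμ hS hlmax hu) herr)
  -- The largest coefficient `c l` forces `|⟪v, g⟫| ≳ (1 - μ)|c l|`, hence
  -- `|c g| ≳ (1 - 2μ)|c l|`, while `|c g - ⟪v, g⟫| ≲ μ |c l|` and `μ ≤ 1/3`.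
  have hcoeff_le : |c g - ⟪v, g⟫| ≤ |c g| + 3 * δ := by
    have hg_coef := hcoef g hgS
    have hl_coef := hcoef l hlS
    have hl_greedy := hgreedy l (hS hlS)
    have hK : 0 ≤ (1 - 3 * μ) * |c l| := mul_nonneg (by linarith) (abs_nonneg _)
    have hl_tri := abs_sub_abs_le_abs_sub (c l) ⟪v, l⟫
    have hg_tri := abs_sub_abs_le_abs_sub ⟪v, g⟫ (c g)
    rw [abs_sub_comm] at hl_tri ⊢
    linarith
  refine mem_repSet_one_iff.2 ⟨S, Function.update c g (c g - ⟪v, g⟫), hS, ?_, ?_⟩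
  · have := Finset.sum_apply_update_add hgS (fun _ a => |a|) c (c g - ⟪v, g⟫)
    linarith
  · have := Finset.sum_apply_update_add hgS (fun x a => a • x) c (c g - ⟪v, g⟫)
    simp only [sub_smul] at this
    rw [← add_left_inj (c g • g), this]
    abel

theorem Anorm_nonneg (p : ℝ) (f : H) : 0 ≤ Anorm D p f :=
  Real.sInf_nonneg fun _ hM => hM.1

theorem mem_Aclass_of_Anorm_lt {f : H} (hf : ∃ M : ℝ, 0 ≤ M ∧ f ∈ Aclass D 1 M) {N : ℝ}
    (hN : Anorm D 1 f < N) : f ∈ Aclass D 1 N := by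
  obtain ⟨M, ⟨-, hM⟩, hMN⟩ := exists_lt_of_csInf_lt hf hN
  exact closure_mono (repSet_one_mono hMN.le) hM

theorem inner_le_of_mem_Aclass {v x : H} {N s : ℝ} (hs : 0 ≤ s)
    (hsup : ∀ g ∈ D, |⟪v, g⟫| ≤ s) (hx : x ∈ Aclass D 1 N) : ⟪v, x⟫ ≤ N * s := by
  refine closure_minimal (t := {y | ⟪v, y⟫ ≤ N * s}) (fun y hy => ?_)
    (isClosed_le (continuous_const.inner continuous_id) continuous_const) hx
  obtain ⟨S, c, hS, hsum, rfl⟩ := mem_repSet_one_iff.1 hy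
  calc ⟪v, ∑ x ∈ S, c x • x⟫ = ∑ x ∈ S, c x * ⟪v, x⟫ := by
        simp only [inner_sum, real_inner_smul_right]
    _ ≤ ∑ x ∈ S, |c x| * s := Finset.sum_le_sum fun x hx => calc
        c x * ⟪v, x⟫ ≤ |c x| * |⟪v, x⟫| := abs_mul (c x) _ ▸ le_abs_self _
        _ ≤ |c x| * s := mul_le_mul_of_nonneg_left (hsup x (hS hx)) (abs_nonneg _)
    _ ≤ N * s := by rw [← Finset.sum_mul]; exact mul_le_mul_of_nonneg_right hsum hs

theorem norm_sq_le_mul_of_forall_mem_Aclass {x : H} {A s : ℝ} (hs : 0 ≤ s)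
    (hsup : ∀ g ∈ D, |⟪x, g⟫| ≤ s) (hx : ∀ N > A, x ∈ Aclass D 1 N) : ‖x‖ ^ 2 ≤ A * s := by
  rw [← real_inner_self_eq_norm_sq]
  refine ge_of_tendsto ((Filter.tendsto_id (x := nhds A)).mul_const s |>.mono_left
    (nhdsWithin_le_nhds (s := Set.Ioi A))) ?_
  filter_upwards [self_mem_nhdsWithin] with N hN
  exact inner_le_of_mem_Aclass hs hsup (hx N hN)

namespace IsPureGreedy

variable {fs gs : ℕ → H}

theorem norm_sq_succ (hpga : IsPureGreedy D fs gs) (hDnorm : ∀ g ∈ D, ‖g‖ = 1) (k : ℕ) :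
    ‖fs (k + 1)‖ ^ 2 = ‖fs k‖ ^ 2 - ⟪fs k, gs (k + 1)⟫ ^ 2 := by
  rw [hpga.step k, norm_sub_sq_real, real_inner_smul_right, norm_smul, hDnorm _ (hpga.mem k),
    Real.norm_eq_abs, mul_one, sq_abs]
  ring

theorem sub_mem_repSet (hpga : IsPureGreedy D fs gs) (hDnorm : ∀ g ∈ D, ‖g‖ = 1) {μ : ℝ}
    (hμ : CumulativeCoherenceLE D μ) (hμ_le : μ ≤ 1 / 3) {h₀ : H} {N δ : ℝ}
    (hh₀ : h₀ ∈ repSet D 1 N) (hδ : ‖fs 0 - h₀‖ ≤ δ) (k : ℕ) : fs k - (fs 0 - h₀) ∈ repSet D 1 (N + 3 * k * δ) := by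
  induction k with
  | zero => simpa using hh₀
  | succ k ih =>
    have hstep := sub_inner_smul_mem_repSet hDnorm hμ hμ_le (δ := δ) ih (by rwa [sub_sub_cancel])
      (hpga.mem k) (hpga.greedy k)
    rw [hpga.step k, sub_right_comm]
    convert hstep using 2
    push_cast
    ring

theorem mem_Aclass (hpga : IsPureGreedy D fs gs) (hDnorm : ∀ g ∈ D, ‖g‖ = 1) {μ : ℝ}
    (hμ : CumulativeCoherenceLE D μ) (hμ_le : μ ≤ 1 / 3) {N N' : ℝ} (hf : fs 0 ∈ Aclass D 1 N)
    (hNN' : N < N') (k : ℕ) : fs k ∈ Aclass D 1 N' := by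
  refine Metric.mem_closure_iff.2 fun ε hε => ?_
  set δ := min ε ((N' - N) / (3 * k + 1))
  have hδ : 0 < δ := lt_min hε (div_pos (by linarith) (by positivity))
  have hkδ : N + 3 * k * δ ≤ N' := by
    have := (le_div_iff₀ (by positivity)).1 (min_le_right ε ((N' - N) / (3 * k + 1)))
    nlinarith
  obtain ⟨h₀, hh₀, hdist⟩ := Metric.mem_closure_iff.1 hf δ hδ
  rw [dist_eq_norm] at hdist
  refine ⟨fs k - (fs 0 - h₀), repSet_one_mono hkδ
    (hpga.sub_mem_repSet hDnorm hμ hμ_le hh₀ hdist.le k), ?_⟩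
  rw [dist_eq_norm, sub_sub_cancel]
  exact hdist.trans_le (min_le_left _ _)

theorem norm_sq_le (hpga : IsPureGreedy D fs gs) (hDnorm : ∀ g ∈ D, ‖g‖ = 1) {μ : ℝ}
    (hμ : CumulativeCoherenceLE D μ) (hμ_le : μ ≤ 1 / 3)
    (hf : ∃ M : ℝ, 0 ≤ M ∧ fs 0 ∈ Aclass D 1 M) (k : ℕ) :
    ‖fs k‖ ^ 2 ≤ Anorm D 1 (fs 0) ^ 2 / (k + 1) := by
  set M₀ := Anorm D 1 (fs 0)
  have hres : ∀ k, ∀ N > M₀, fs k ∈ Aclass D 1 N := fun k N hN =>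
    hpga.mem_Aclass hDnorm hμ hμ_le (mem_Aclass_of_Anorm_lt hf (left_lt_add_div_two.2 hN))
      (add_div_two_lt_right.2 hN) k
  have henergy : ∀ k, ‖fs k‖ ^ 2 ≤ M₀ * |⟪fs k, gs (k + 1)⟫| := fun k =>
    norm_sq_le_mul_of_forall_mem_Aclass (abs_nonneg _) (hpga.greedy k) (hres k)
  refine le_div_succ_of_mul_le_mul_sub (a := fun k => ‖fs k‖ ^ 2) (sq_nonneg M₀)
    (fun k => sq_nonneg _) (fun k => ?_) k
  have := mul_le_mul (henergy k) (henergy k) (sq_nonneg _)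
    (mul_nonneg (Anorm_nonneg 1 (fs 0)) (abs_nonneg _))
  rw [hpga.norm_sq_succ hDnorm k]
  nlinarith [sq_abs ⟪fs k, gs (k + 1)⟫]

end IsPureGreedy

end

theorem pga_rate_A1_general
    {H : Type*} [NormedAddCommGroup H] [InnerProductSpace ℝ H]
    (D : Set H) (hDnorm : ∀ g ∈ D, ‖g‖ = 1)
    (μ : ℝ) (hμlt : μ < 1 / 3)
    (hμ : ∀ g ∈ D, ∀ S : Finset H, ↑S ⊆ D → g ∉ S →
      ∑ h ∈ S, |⟪h, g⟫| ≤ μ)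
    (f : H) (hf : ∃ M : ℝ, 0 ≤ M ∧ f ∈ Aclass D 1 M)
    (fs : ℕ → H) (gs : ℕ → H)
    (h0 : fs 0 = f)
    (hgD : ∀ m, gs (m + 1) ∈ D)
    (hgreedy : ∀ m, ∀ g ∈ D, |⟪fs m, g⟫| ≤ |⟪fs m, gs (m + 1)⟫|)
    (hstep : ∀ m, fs (m + 1) = fs m - ⟪fs m, gs (m + 1)⟫ • gs (m + 1)) :
    ∀ m : ℕ, 1 ≤ m → ‖fs m‖ ≤ Anorm D 1 f * (m : ℝ) ^ (-(1 / 2) : ℝ) := by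
  intro m hm
  subst h0
  have hsq := IsPureGreedy.norm_sq_le ⟨hgD, hgreedy, hstep⟩ hDnorm hμ hμlt.le hf m
  have hm' : (0 : ℝ) < m := by exact_mod_cast hm
  rw [Real.rpow_neg hm'.le, ← Real.sqrt_eq_rpow, ← div_eq_mul_inv,
    ← Real.sqrt_sq (Anorm_nonneg 1 (fs 0)), ← Real.sqrt_div' _ hm'.le]
  refine Real.le_sqrt_of_sq_le (hsq.trans (div_le_div_of_nonneg_left (sq_nonneg _) hm' ?_))
  linarith

/-- Theorem 1: for a dictionary with cumulative coherence `μ₁(D) < 1/3` and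
`f ∈ A¹(D)`, the Pure Greedy Algorithm residuals satisfy
`‖f_m‖ ≤ |f|₁ m^{-1/2}` for all `m ≥ 1`. -/
theorem pga_rate_A1
    {H : Type*} [NormedAddCommGroup H] [InnerProductSpace ℝ H] [CompleteSpace H]
    [TopologicalSpace.SeparableSpace H]
    (D : Set H) (hDnorm : ∀ g ∈ D, ‖g‖ = 1)
    (hDdense : Dense (↑(Submodule.span ℝ D) : Set H))
    (μ : ℝ) (hμlt : μ < 1 / 3)
    (hμ : ∀ g ∈ D, ∀ S : Finset H, ↑S ⊆ D → g ∉ S →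
      ∑ h ∈ S, |⟪h, g⟫| ≤ μ)
    (f : H) (hf : ∃ M : ℝ, 0 ≤ M ∧ f ∈ Aclass D 1 M)
    (fs : ℕ → H) (gs : ℕ → H)
    (h0 : fs 0 = f)
    (hgD : ∀ m, gs (m + 1) ∈ D)
    (hgreedy : ∀ m, ∀ g ∈ D, |⟪fs m, g⟫| ≤ |⟪fs m, gs (m + 1)⟫|)
    (hstep : ∀ m, fs (m + 1) = fs m - ⟪fs m, gs (m + 1)⟫ • gs (m + 1)) :
    ∀ m : ℕ, 1 ≤ m → ‖fs m‖ ≤ Anorm D 1 f * (m : ℝ) ^ (-(1 / 2) : ℝ) :=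
  pga_rate_A1_general D hDnorm μ hμlt hμ f hf fs gs h0 hgD hgreedy hstep
end

section
/- (Greedy selection gap) Let D be a dictionary with cumulative coherence μ₁(D), Λ finite, and f = f_ε + Σ_{λ∈Λ} c_λ g^λ with ‖f_ε‖ < ε. Then sup_{g∈D}|⟨f,g⟩| > (1 − μ₁(D)) max_{λ∈Λ}|c_λ| − ε. -/
open RealInnerProductSpace Finset

/-- Greedy selection gap: if `f = f_ε + Σ_{λ∈Λ} c_λ g^λ` with `‖f_ε‖ < ε`,
then `sup_{g∈D}|⟨f,g⟩| > (1 - μ₁(D)) max_{λ∈Λ}|c_λ| - ε`; formalized as the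
existence of `g ∈ D` exceeding the bound. -/
theorem greedy_selection_gap
    {H : Type*} [NormedAddCommGroup H] [InnerProductSpace ℝ H] [CompleteSpace H]
    (D : Set H) (hDnorm : ∀ g ∈ D, ‖g‖ = 1)
    (μ : ℝ)
    (hμ : ∀ g ∈ D, ∀ S : Finset H, ↑S ⊆ D → g ∉ S →
      ∑ h ∈ S, |⟪h, g⟫| ≤ μ)
    {ι : Type*} (Λ : Finset ι) (hΛ : Λ.Nonempty)
    (gl : ι → H) (hglD : ∀ l ∈ Λ, gl l ∈ D) (hinj : Set.InjOn gl ↑Λ)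
    (c : ι → ℝ) (f fε : H) (ε : ℝ) (hε : ‖fε‖ < ε)
    (hrep : f = fε + ∑ l ∈ Λ, c l • gl l) :
    ∃ g ∈ D, (1 - μ) * (Λ.sup' hΛ fun l => |c l|) - ε < |⟪f, g⟫| := by
  classical
  obtain ⟨l₀, hl₀, hM⟩ := Finset.exists_mem_eq_sup' hΛ fun l => |c l|
  set g : H := gl l₀ with hg
  have hgD : g ∈ D := hglD l₀ hl₀
  have hgnorm : ‖g‖ = 1 := hDnorm g hgD
  set M : ℝ := Λ.sup' hΛ fun l => |c l| with hMdef
  have hM0 : 0 ≤ M := hM ▸ abs_nonneg _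
  refine ⟨g, hgD, ?_⟩
  -- inner product expansion
  have hgg : ⟪g, g⟫ = (1 : ℝ) := by
    rw [real_inner_self_eq_norm_sq, hgnorm]; norm_num
  have hexp : ⟪f, g⟫ = ⟪fε, g⟫ + (c l₀ + ∑ l ∈ Λ.erase l₀, c l * ⟪gl l, g⟫) := by
    rw [hrep, inner_add_left, sum_inner]
    congr 1
    rw [← Finset.add_sum_erase _ _ hl₀, real_inner_smul_left, hgg, mul_one]
    simp [real_inner_smul_left]
  -- the finset of other vectors
  set S : Finset H := (Λ.erase l₀).image gl with hS
  have hSD : ↑S ⊆ D := by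
    intro h hh
    simp only [hS, coe_image, Set.mem_image, mem_coe, Finset.mem_erase] at hh
    obtain ⟨l, ⟨_, hl⟩, rfl⟩ := hh
    exact hglD l hl
  have hgS : g ∉ S := by
    intro hgin
    simp only [hS, Finset.mem_image] at hgin
    obtain ⟨l, hl, heq⟩ := hgin
    exact (Finset.mem_erase.mp hl).1
      (hinj (Finset.mem_coe.mpr (Finset.mem_of_mem_erase hl)) (Finset.mem_coe.mpr hl₀) heq)
  have hsumS : ∑ h ∈ S, |⟪h, g⟫| = ∑ l ∈ Λ.erase l₀, |⟪gl l, g⟫| := by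
    rw [hS, Finset.sum_image]
    intro x hx y hy hxy
    exact hinj (Finset.mem_coe.mpr (Finset.mem_of_mem_erase hx))
      (Finset.mem_coe.mpr (Finset.mem_of_mem_erase hy)) hxy
  have hcoh : ∑ l ∈ Λ.erase l₀, |⟪gl l, g⟫| ≤ μ := by
    rw [← hsumS]; exact hμ g hgD S hSD hgS
  have htail : |∑ l ∈ Λ.erase l₀, c l * ⟪gl l, g⟫| ≤ M * μ := by
    calc |∑ l ∈ Λ.erase l₀, c l * ⟪gl l, g⟫|
        ≤ ∑ l ∈ Λ.erase l₀, |c l * ⟪gl l, g⟫| := Finset.abs_sum_le_sum_abs _ _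
      _ ≤ ∑ l ∈ Λ.erase l₀, M * |⟪gl l, g⟫| := by
          refine Finset.sum_le_sum fun l hl => ?_
          rw [abs_mul]
          exact mul_le_mul_of_nonneg_right
            (Finset.le_sup' (fun l => |c l|) (Finset.mem_of_mem_erase hl))
            (abs_nonneg _)
      _ = M * ∑ l ∈ Λ.erase l₀, |⟪gl l, g⟫| := (Finset.mul_sum _ _ _).symm
      _ ≤ M * μ := mul_le_mul_of_nonneg_left hcoh hM0
  have hfε : |⟪fε, g⟫| < ε :=
    lt_of_le_of_lt (by simpa [hgnorm] using abs_real_inner_le_norm fε g) hε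
  have hkey : |c l₀| ≤ |⟪f, g⟫| + |⟪fε, g⟫| + |∑ l ∈ Λ.erase l₀, c l * ⟪gl l, g⟫| := by
    have h : c l₀ = ⟪f, g⟫ - ⟪fε, g⟫ - ∑ l ∈ Λ.erase l₀, c l * ⟪gl l, g⟫ := by
      rw [hexp]; ring
    calc |c l₀| = |(⟪f, g⟫ - ⟪fε, g⟫) - ∑ l ∈ Λ.erase l₀, c l * ⟪gl l, g⟫| := by
          rw [h]
      _ ≤ |⟪f, g⟫ - ⟪fε, g⟫| + |∑ l ∈ Λ.erase l₀, c l * ⟪gl l, g⟫| := abs_sub _ _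
      _ ≤ |⟪f, g⟫| + |⟪fε, g⟫| + |∑ l ∈ Λ.erase l₀, c l * ⟪gl l, g⟫| := by
          linarith [abs_sub (⟪f, g⟫) (⟪fε, g⟫)]
  have hMc : M = |c l₀| := hM
  nlinarith [htail, hfε, hkey, abs_nonneg (∑ l ∈ Λ.erase l₀, c l * ⟪gl l, g⟫)]
end

section
/- (Selected coefficient is near-maximal) Let D be a dictionary with μ₁(D) < 1/3, Λ finite, f = f_ε + Σ_{λ∈Λ} c_λ g^λ with ‖f_ε‖ < ε, and ε < (1/6)(1 − 3μ₁(D)) max_{λ∈Λ}|c_λ|. If λ₀ ∈ Λ satisfies |⟨f,g^{λ₀}⟩| = sup_{g∈D}|⟨f,g⟩|, then |c_{λ₀}| > (1 − 2μ₁(D)) max_{λ∈Λ}|c_λ| − 2ε, and in particular |c_{λ₀}| > 0. -/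
open RealInnerProductSpace Finset

/-- Selected coefficient is near-maximal: with `μ₁(D) < 1/3` and small `ε`, if
`λ₀` is the index selected by a greedy step, then
`|c_{λ₀}| > (1 - 2μ₁(D)) max_{λ∈Λ}|c_λ| - 2ε > 0`. -/
theorem selected_coefficient_near_maximal
    {H : Type*} [NormedAddCommGroup H] [InnerProductSpace ℝ H] [CompleteSpace H]
    (D : Set H) (hDnorm : ∀ g ∈ D, ‖g‖ = 1)
    (μ : ℝ) (hμlt : μ < 1 / 3)
    (hμ : ∀ g ∈ D, ∀ S : Finset H, ↑S ⊆ D → g ∉ S →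
      ∑ h ∈ S, |⟪h, g⟫| ≤ μ)
    {ι : Type*} (Λ : Finset ι) (hΛ : Λ.Nonempty)
    (gl : ι → H) (hglD : ∀ l ∈ Λ, gl l ∈ D) (hinj : Set.InjOn gl ↑Λ)
    (c : ι → ℝ) (f fε : H) (ε : ℝ) (hε : ‖fε‖ < ε)
    (hrep : f = fε + ∑ l ∈ Λ, c l • gl l)
    (hεsmall : ε < (1 / 6) * (1 - 3 * μ) * (Λ.sup' hΛ fun l => |c l|))
    (l₀ : ι) (hl₀ : l₀ ∈ Λ)
    (hsup : ∀ g' ∈ D, |⟪f, g'⟫| ≤ |⟪f, gl l₀⟫|) :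
    (1 - 2 * μ) * (Λ.sup' hΛ fun l => |c l|) - 2 * ε < |c l₀| ∧ 0 < |c l₀| := by
  classical
  set M := Λ.sup' hΛ fun l => |c l| with hM
  have hMnonneg : 0 ≤ M := le_trans (abs_nonneg (c l₀)) (Finset.le_sup' (fun l => |c l|) hl₀)
  have hfεnn : (0:ℝ) ≤ ‖fε‖ := norm_nonneg _
  have hμ0 : 0 ≤ μ := by
    have := hμ (gl l₀) (hglD l₀ hl₀) ∅ (by simp) (by simp)
    simpa using this
  have hMpos : 0 < M := by nlinarith
  have hcoh : ∀ l' ∈ Λ, ∑ l ∈ Λ.erase l', |⟪gl l, gl l'⟫| ≤ μ := by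
    intro l' hl'
    have hS : ∑ h ∈ (Λ.erase l').image gl, |⟪h, gl l'⟫| =
        ∑ l ∈ Λ.erase l', |⟪gl l, gl l'⟫| := by
      apply Finset.sum_image
      intro x hx y hy hxy
      exact hinj (Λ.erase_subset _ hx) (Λ.erase_subset _ hy) hxy
    rw [← hS]
    apply hμ (gl l') (hglD l' hl')
    · intro h hh
      simp only [Finset.coe_image, Set.mem_image] at hh
      obtain ⟨x, hx, rfl⟩ := hh
      exact hglD x (Λ.erase_subset _ hx)
    · intro hmem
      simp only [Finset.mem_image] at hmem
      obtain ⟨x, hx, hxy⟩ := hmem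
      exact (Finset.mem_erase.mp hx).1 (hinj (Λ.erase_subset _ hx) hl' hxy)
  have hkey : ∀ l' ∈ Λ, |⟪f, gl l'⟫ - c l'| ≤ ‖fε‖ + μ * M := by
    intro l' hl'
    have hnorm1 : ⟪gl l', gl l'⟫ = (1:ℝ) := by
      rw [real_inner_self_eq_norm_sq, hDnorm (gl l') (hglD l' hl')]; norm_num
    have hinner : ⟪f, gl l'⟫ = ⟪fε, gl l'⟫ + ∑ l ∈ Λ, c l * ⟪gl l, gl l'⟫ := by
      rw [hrep]
      simp [inner_add_left, sum_inner, real_inner_smul_left]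
    have hsplit : ∑ l ∈ Λ, c l * ⟪gl l, gl l'⟫ =
        c l' + ∑ l ∈ Λ.erase l', c l * ⟪gl l, gl l'⟫ := by
      rw [← Finset.add_sum_erase _ _ hl', hnorm1, mul_one]
    have h1 : |⟪fε, gl l'⟫| ≤ ‖fε‖ := by
      calc |⟪fε, gl l'⟫| ≤ ‖fε‖ * ‖gl l'‖ := abs_real_inner_le_norm _ _
        _ = ‖fε‖ := by rw [hDnorm _ (hglD l' hl')]; ring
    have h2 : |∑ l ∈ Λ.erase l', c l * ⟪gl l, gl l'⟫| ≤ μ * M := by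
      calc |∑ l ∈ Λ.erase l', c l * ⟪gl l, gl l'⟫|
          ≤ ∑ l ∈ Λ.erase l', |c l * ⟪gl l, gl l'⟫| := Finset.abs_sum_le_sum_abs _ _
        _ ≤ ∑ l ∈ Λ.erase l', M * |⟪gl l, gl l'⟫| := by
            apply Finset.sum_le_sum
            intro i hi
            rw [abs_mul]
            exact mul_le_mul_of_nonneg_right
              (Finset.le_sup' (fun l => |c l|) (Λ.erase_subset _ hi)) (abs_nonneg _)
        _ = M * ∑ l ∈ Λ.erase l', |⟪gl l, gl l'⟫| := by rw [Finset.mul_sum]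
        _ ≤ M * μ := mul_le_mul_of_nonneg_left (hcoh l' hl') hMnonneg
        _ = μ * M := mul_comm _ _
    have heq : ⟪f, gl l'⟫ - c l' =
        ⟪fε, gl l'⟫ + ∑ l ∈ Λ.erase l', c l * ⟪gl l, gl l'⟫ := by
      rw [hinner, hsplit]; ring
    rw [heq]
    exact le_trans (abs_add_le _ _) (add_le_add h1 h2)
  obtain ⟨ls, hls, hlsM⟩ := Λ.exists_mem_eq_sup' hΛ fun l => |c l|
  have h₀ := hkey l₀ hl₀
  have hs := hkey ls hls
  have hsup0 := hsup (gl ls) (hglD ls hls)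
  have a1 : |⟪f, gl l₀⟫| - |c l₀| ≤ ‖fε‖ + μ * M :=
    le_trans (abs_sub_abs_le_abs_sub _ _) h₀
  have a2 : |c ls| - |⟪f, gl ls⟫| ≤ ‖fε‖ + μ * M := by
    have := abs_sub_abs_le_abs_sub (c ls) (⟪f, gl ls⟫)
    rw [abs_sub_comm] at this
    linarith
  have hclsM : |c ls| = M := hlsM.symm
  constructor
  · linarith
  · nlinarith
end
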